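/- arXiv:1812.01171 — 2 statements merged into one kernel-verified Lean document; each statement's English description precedes it below -/
import Mathlib

section
/- For density matrices ρ and σ on a finite-dimensional Hilbert space, the fidelity F(ρ,σ) = (Tr√(√ρ σ √ρ))² satisfies F(ρ,σ) ≥ (1 - ½‖ρ - σ‖₁)², where ‖·‖₁ is the trace norm. -/
open scoped ComplexOrder Matrix

open Classical in
/-- Square root of a positive semidefinite matrix (junk value `0` otherwise). -/
noncomputable def msqrt {n : Type*} [Fintype n] [DecidableEq n] (A : Matrix n n ℂ) :
    Matrix n n ℂ :=
  if h : A.PosSemidef then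
    (h.1.eigenvectorUnitary : Matrix n n ℂ) *
      Matrix.diagonal ((↑) ∘ (Real.sqrt ·) ∘ h.1.eigenvalues) *
      (star h.1.eigenvectorUnitary : Matrix n n ℂ)
  else 0

/-- Trace norm `‖A‖₁ = Tr √(Aᴴ A)`. -/
noncomputable def traceNorm {n : Type*} [Fintype n] [DecidableEq n] (A : Matrix n n ℂ) : ℝ :=
  (msqrt (Aᴴ * A)).trace.re

/-- Fidelity `F(ρ,σ) = (Tr √(√ρ σ √ρ))²`. -/
noncomputable def fidelity {n : Type*} [Fintype n] [DecidableEq n] (ρ σ : Matrix n n ℂ) : ℝ :=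
  ((msqrt (msqrt ρ * σ * msqrt ρ)).trace.re) ^ 2

set_option linter.unusedSectionVars false
set_option maxHeartbeats 1000000

section Aux
variable {n : Type*} [Fintype n] [DecidableEq n]
noncomputable def Matrix.PosSemidef.sqrt {A : Matrix n n ℂ} (h : A.PosSemidef) : Matrix n n ℂ :=
  (h.1.eigenvectorUnitary : Matrix n n ℂ) *
      Matrix.diagonal ((↑) ∘ (Real.sqrt ·) ∘ h.1.eigenvalues) *
      (star h.1.eigenvectorUnitary : Matrix n n ℂ)
open scoped MatrixOrder in
lemma Matrix.PosSemidef.sqrt_eq_cfcSqrt {A : Matrix n n ℂ} (h : A.PosSemidef) :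
    h.sqrt = CFC.sqrt A := by
  rw [CFC.sqrt_eq_real_sqrt A h.nonneg, cfcₙ_eq_cfc, h.1.cfc_eq]
  rfl
open scoped MatrixOrder in
lemma Matrix.PosSemidef.posSemidef_sqrt {A : Matrix n n ℂ} (h : A.PosSemidef) :
    h.sqrt.PosSemidef := by
  rw [h.sqrt_eq_cfcSqrt]; exact Matrix.nonneg_iff_posSemidef.mp (CFC.sqrt_nonneg A)
open scoped MatrixOrder in
lemma Matrix.PosSemidef.sqrt_mul_self {A : Matrix n n ℂ} (h : A.PosSemidef) :
    h.sqrt * h.sqrt = A := by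
  rw [h.sqrt_eq_cfcSqrt]; exact CFC.sqrt_mul_sqrt_self A h.nonneg
open scoped MatrixOrder in
lemma Matrix.PosSemidef.eq_sqrt_of_sq_eq {B A : Matrix n n ℂ} (hB : B.PosSemidef)
    (hA : A.PosSemidef) (h : B ^ 2 = A) : B = hA.sqrt := by
  rw [hA.sqrt_eq_cfcSqrt]
  exact (CFC.sqrt_unique (by rw [← sq]; exact h) hB.nonneg).symm
lemma Matrix.IsHermitian.star_mul_self_mul_eq_diagonal {A : Matrix n n ℂ} (hA : A.IsHermitian) :
    star (hA.eigenvectorUnitary : Matrix n n ℂ) * A * (hA.eigenvectorUnitary : Matrix n n ℂ)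
      = Matrix.diagonal (RCLike.ofReal ∘ hA.eigenvalues) := by
  have := hA.conjStarAlgAut_star_eigenvectorUnitary
  simpa using this


/-- diagonal entry of conjugated matrix as quadratic form -/
lemma diag_conj (U X : Matrix n n ℂ) (j : n) :
    (Uᴴ * X * U) j j = dotProduct (star (fun i => U i j)) (X *ᵥ (fun i => U i j)) := by
  simp only [Matrix.mul_apply, dotProduct, Matrix.mulVec, Matrix.conjTranspose_apply,
    Pi.star_apply, dotProduct, Finset.sum_mul, Finset.mul_sum]
  rw [Finset.sum_comm]
  apply Finset.sum_congr rfl; intro i _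
  apply Finset.sum_congr rfl; intro k _
  ring

lemma trace_conj (V : Matrix.unitaryGroup n ℂ) (X : Matrix n n ℂ) :
    ((V : Matrix n n ℂ)ᴴ * X * V).trace = X.trace := by
  rw [Matrix.trace_mul_cycle]
  have : (V : Matrix n n ℂ) * (V : Matrix n n ℂ)ᴴ = 1 := by
    simpa [Matrix.star_eq_conjTranspose] using V.2.2
  rw [this, Matrix.one_mul]

lemma trace_eq_sum_diag_conj (V : Matrix.unitaryGroup n ℂ) (X : Matrix n n ℂ) :
    X.trace = ∑ j, ((V : Matrix n n ℂ)ᴴ * X * V) j j := by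
  rw [← trace_conj V X]; rfl

lemma trace_diagonal_mul (d : n → ℂ) (B : Matrix n n ℂ) :
    (Matrix.diagonal d * B).trace = ∑ i, d i * B i i := by
  simp [Matrix.trace, Matrix.diag, Matrix.mul_apply, Matrix.diagonal]

lemma trace_mul_diagonal (d : n → ℂ) (B : Matrix n n ℂ) :
    (B * Matrix.diagonal d).trace = ∑ i, d i * B i i := by
  rw [Matrix.trace_mul_comm]; exact trace_diagonal_mul d B

lemma msqrt_eq {A : Matrix n n ℂ} (hA : A.PosSemidef) : msqrt A = hA.sqrt := dif_pos hA

lemma trace_conj' (V : Matrix.unitaryGroup n ℂ) (X : Matrix n n ℂ) :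
    ((V : Matrix n n ℂ) * X * (V : Matrix n n ℂ)ᴴ).trace = X.trace := by
  rw [Matrix.trace_mul_cycle]
  have : (V : Matrix n n ℂ)ᴴ * (V : Matrix n n ℂ) = 1 := by
    simpa [Matrix.star_eq_conjTranspose] using Matrix.UnitaryGroup.star_mul_self V
  rw [this, Matrix.one_mul]

lemma conj_mul_conj (V : Matrix.unitaryGroup n ℂ) (d e : n → ℂ) :
    ((V : Matrix n n ℂ) * Matrix.diagonal d * (V : Matrix n n ℂ)ᴴ) *
      ((V : Matrix n n ℂ) * Matrix.diagonal e * (V : Matrix n n ℂ)ᴴ) =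
    (V : Matrix n n ℂ) * Matrix.diagonal (fun i => d i * e i) * (V : Matrix n n ℂ)ᴴ := by
  have h1 : (V : Matrix n n ℂ)ᴴ * (V : Matrix n n ℂ) = 1 := by
    simpa [Matrix.star_eq_conjTranspose] using Matrix.UnitaryGroup.star_mul_self V
  calc ((V : Matrix n n ℂ) * Matrix.diagonal d * (V : Matrix n n ℂ)ᴴ) *
      ((V : Matrix n n ℂ) * Matrix.diagonal e * (V : Matrix n n ℂ)ᴴ)
      = (V : Matrix n n ℂ) * Matrix.diagonal d * ((V : Matrix n n ℂ)ᴴ * (V : Matrix n n ℂ)) *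
        Matrix.diagonal e * (V : Matrix n n ℂ)ᴴ := by simp only [Matrix.mul_assoc]
    _ = (V : Matrix n n ℂ) * (Matrix.diagonal d * Matrix.diagonal e) * (V : Matrix n n ℂ)ᴴ := by
        rw [h1]; simp only [Matrix.mul_one, Matrix.mul_assoc]
    _ = _ := by rw [Matrix.diagonal_mul_diagonal]

/-- trace norm of a Hermitian matrix is the sum of absolute values of eigenvalues -/
lemma traceNorm_hermitian {M : Matrix n n ℂ} (hM : M.IsHermitian) :
    traceNorm M = ∑ j, |hM.eigenvalues j| := by
  have hMM : (Mᴴ * M).PosSemidef := Matrix.posSemidef_conjTranspose_mul_self M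
  set W := hM.eigenvectorUnitary with hW
  set Q := (W : Matrix n n ℂ) * Matrix.diagonal ((↑) ∘ fun i => |hM.eigenvalues i|) *
    (W : Matrix n n ℂ)ᴴ with hQdef
  have hQ : Q.PosSemidef := by
    apply Matrix.PosSemidef.mul_mul_conjTranspose_same
    apply Matrix.PosSemidef.diagonal
    intro i
    simpa using Complex.zero_le_real.mpr (abs_nonneg (hM.eigenvalues i))
  have hspec : M = (W : Matrix n n ℂ) * Matrix.diagonal (RCLike.ofReal ∘ hM.eigenvalues) *
      (W : Matrix n n ℂ)ᴴ := by
    simpa [Matrix.star_eq_conjTranspose] using hM.spectral_theorem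
  have hQ2 : Q ^ 2 = Mᴴ * M := by
    rw [hM.eq, pow_two, hQdef, conj_mul_conj]
    conv_rhs => rw [hspec]
    rw [conj_mul_conj]
    have hd : (fun i => (Complex.ofReal ∘ fun i => |hM.eigenvalues i|) i *
          (Complex.ofReal ∘ fun i => |hM.eigenvalues i|) i)
        = (fun i => (RCLike.ofReal ∘ hM.eigenvalues) i * (RCLike.ofReal ∘ hM.eigenvalues) i :
          n → ℂ) := by
      funext i
      simp only [Function.comp_apply]
      rw [← Complex.ofReal_mul, abs_mul_abs_self, Complex.ofReal_mul]
      norm_cast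
    rw [hd]
  have hsqrt : msqrt (Mᴴ * M) = Q := by
    rw [msqrt_eq hMM, ← hQ.eq_sqrt_of_sq_eq hMM hQ2]
  have htr : (msqrt (Mᴴ * M)).trace = ∑ j, (Complex.ofReal |hM.eigenvalues j|) := by
    rw [hsqrt, hQdef, trace_conj', Matrix.trace_diagonal]
    rfl
  rw [traceNorm, htr]
  simp

lemma re_trace_le_trace_msqrt (N : Matrix n n ℂ) :
    N.trace.re ≤ (msqrt (Nᴴ * N)).trace.re := by
  have hA : (Nᴴ * N).PosSemidef := Matrix.posSemidef_conjTranspose_mul_self N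
  set G := hA.sqrt with hGdef
  have hG : G.PosSemidef := hA.posSemidef_sqrt
  have hGG : G * G = Nᴴ * N := hA.sqrt_mul_self
  have hmsqrt : msqrt (Nᴴ * N) = G := msqrt_eq hA
  set Y := hG.1.eigenvectorUnitary with hY
  set s := hG.1.eigenvalues with hs
  have hs0 : ∀ j, 0 ≤ s j := hG.eigenvalues_nonneg
  -- trace of G is the sum of its eigenvalues
  have htrG : G.trace = ∑ j, (s j : ℂ) := by
    rw [← trace_conj Y G]
    have := hG.1.star_mul_self_mul_eq_diagonal
    rw [Matrix.star_eq_conjTranspose] at this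
    rw [this, Matrix.trace_diagonal]
    rfl
  -- each diagonal entry of Yᴴ N Y has re ≤ s j
  have hbound : ∀ j, (((Y : Matrix n n ℂ)ᴴ * N * Y) j j).re ≤ s j := by
    intro j
    set y : EuclideanSpace ℂ n := hG.1.eigenvectorBasis j with hy
    have hcol : (fun i => (Y : Matrix n n ℂ) i j) = ⇑y := by funext i; rfl
    have hentry : ((Y : Matrix n n ℂ)ᴴ * N * Y) j j
        = dotProduct (star ⇑y) (N *ᵥ ⇑y) := by
      rw [diag_conj, hcol]
    set z : EuclideanSpace ℂ n := (WithLp.equiv 2 _).symm (N *ᵥ ⇑y) with hz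
    have hinner : (inner ℂ y z : ℂ) = dotProduct (star ⇑y) (N *ᵥ ⇑y) := (EuclideanSpace.inner_eq_star_dotProduct _ _).trans (dotProduct_comm _ _)
    have hny : ‖y‖ = 1 := hG.1.eigenvectorBasis.orthonormal.1 j
    have hvv : (inner ℂ y y : ℂ) = dotProduct (star ⇑y) ⇑y := (EuclideanSpace.inner_eq_star_dotProduct _ _).trans (dotProduct_comm _ _)
    have hGv : G *ᵥ ⇑y = s j • ⇑y := hG.1.mulVec_eigenvectorBasis j
    have hzz : (inner ℂ z z : ℂ) = (s j : ℂ) * ((s j : ℂ) * (inner ℂ y y : ℂ)) := by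
      have : (inner ℂ z z : ℂ) = dotProduct (star (N *ᵥ ⇑y)) (N *ᵥ ⇑y) := (EuclideanSpace.inner_eq_star_dotProduct _ _).trans (dotProduct_comm _ _)
      rw [this, Matrix.star_mulVec, ← Matrix.dotProduct_mulVec,
        Matrix.mulVec_mulVec, ← hGG, ← Matrix.mulVec_mulVec, hGv,
        Matrix.mulVec_smul, hGv, hvv]
      simp [dotProduct_smul, Complex.real_smul]
    have hzn : ‖z‖ = s j := by
      have h1 : ‖z‖ ^ 2 = Complex.re (inner ℂ z z : ℂ) := by
        rw [norm_sq_eq_re_inner (𝕜 := ℂ) z]; rfl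
      have h2 : Complex.re (inner ℂ y y : ℂ) = 1 := by
        have h : RCLike.re (inner ℂ y y : ℂ) = 1 := by
          rw [← norm_sq_eq_re_inner, hny]; norm_num
        rw [← h]; rfl
      have h3 : ‖z‖ ^ 2 = s j ^ 2 := by
        rw [h1, hzz, Complex.re_ofReal_mul, Complex.re_ofReal_mul, h2]
        ring
      calc ‖z‖ = Real.sqrt (‖z‖ ^ 2) := (Real.sqrt_sq (norm_nonneg z)).symm
        _ = Real.sqrt (s j ^ 2) := by rw [h3]
        _ = s j := Real.sqrt_sq (hs0 j)
    calc (((Y : Matrix n n ℂ)ᴴ * N * Y) j j).re = (inner ℂ y z : ℂ).re := by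
          rw [hentry, ← hinner]
      _ ≤ ‖(inner ℂ y z : ℂ)‖ := Complex.re_le_norm _
      _ ≤ ‖y‖ * ‖z‖ := norm_inner_le_norm y z
      _ = s j := by rw [hny, hzn, one_mul]
  have htrN : N.trace = ∑ j, ((Y : Matrix n n ℂ)ᴴ * N * Y) j j := trace_eq_sum_diag_conj Y N
  calc N.trace.re = ∑ j, (((Y : Matrix n n ℂ)ᴴ * N * Y) j j).re := by
        rw [htrN, Complex.re_sum]
    _ ≤ ∑ j, s j := Finset.sum_le_sum fun j _ => hbound j
    _ = (msqrt (Nᴴ * N)).trace.re := by rw [hmsqrt, htrG, Complex.re_sum]; simp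

lemma diag_conj_psd {X : Matrix n n ℂ} (hX : X.PosSemidef) (U : Matrix n n ℂ) (j : n) :
    0 ≤ ((Uᴴ * X * U) j j).re ∧ ((Uᴴ * X * U) j j).im = 0 := by
  rw [diag_conj]
  have h := hX.dotProduct_mulVec_nonneg (fun i => U i j)
  rw [Complex.nonneg_iff] at h
  exact ⟨h.1, h.2.symm⟩

lemma sum_diag_eq_trace (B : Matrix n n ℂ) : ∑ j, B j j = B.trace := rfl

lemma traceNorm_sub_le_two {ρ σ : Matrix n n ℂ} (hρ : ρ.PosSemidef) (hσ : σ.PosSemidef)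
    (hρtr : ρ.trace = 1) (hσtr : σ.trace = 1) :
    traceNorm (ρ - σ) ≤ 2 := by
  have hM : (ρ - σ).IsHermitian := hρ.1.sub hσ.1
  rw [traceNorm_hermitian hM]
  set W : Matrix n n ℂ := (hM.eigenvectorUnitary : Matrix n n ℂ) with hWdef
  have hdiag : Wᴴ * (ρ - σ) * W = Matrix.diagonal (RCLike.ofReal ∘ hM.eigenvalues) := by
    have := hM.star_mul_self_mul_eq_diagonal
    rwa [Matrix.star_eq_conjTranspose] at this
  have hsplit : ∀ j, hM.eigenvalues j
      = ((Wᴴ * ρ * W) j j).re - ((Wᴴ * σ * W) j j).re := by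
    intro j
    have h1 : (Wᴴ * (ρ - σ) * W) j j = Complex.ofReal (hM.eigenvalues j) := by
      rw [hdiag]; simp [Matrix.diagonal]
    have h2 : Wᴴ * (ρ - σ) * W = Wᴴ * ρ * W - Wᴴ * σ * W := by
      rw [Matrix.mul_sub, Matrix.sub_mul]
    rw [h2] at h1
    have := congrArg Complex.re h1
    simpa using this.symm
  have habs : ∀ j, |hM.eigenvalues j|
      ≤ ((Wᴴ * ρ * W) j j).re + ((Wᴴ * σ * W) j j).re := by
    intro j
    rw [hsplit j]
    have ha := (diag_conj_psd hρ W j).1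
    have hb := (diag_conj_psd hσ W j).1
    calc |((Wᴴ * ρ * W) j j).re - ((Wᴴ * σ * W) j j).re|
        ≤ |((Wᴴ * ρ * W) j j).re| + |((Wᴴ * σ * W) j j).re| := abs_sub _ _
      _ = _ := by rw [abs_of_nonneg ha, abs_of_nonneg hb]
  calc ∑ j, |hM.eigenvalues j|
      ≤ ∑ j, (((Wᴴ * ρ * W) j j).re + ((Wᴴ * σ * W) j j).re) :=
        Finset.sum_le_sum fun j _ => habs j
    _ = ((Wᴴ * ρ * W).trace).re + ((Wᴴ * σ * W).trace).re := by
        rw [Finset.sum_add_distrib, ← sum_diag_eq_trace, ← sum_diag_eq_trace,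
          Complex.re_sum, Complex.re_sum]
    _ = 2 := by
        rw [hWdef, trace_conj hM.eigenvectorUnitary, trace_conj hM.eigenvectorUnitary,
          hρtr, hσtr]
        norm_num

lemma conj_mul_conjM (U : Matrix n n ℂ) (hU : Uᴴ * U = 1) (d e : n → ℂ) :
    (U * Matrix.diagonal d * Uᴴ) * (U * Matrix.diagonal e * Uᴴ)
      = U * Matrix.diagonal (fun i => d i * e i) * Uᴴ := by
  calc (U * Matrix.diagonal d * Uᴴ) * (U * Matrix.diagonal e * Uᴴ)
      = U * Matrix.diagonal d * (Uᴴ * U) * Matrix.diagonal e * Uᴴ := by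
        simp only [Matrix.mul_assoc]
    _ = U * (Matrix.diagonal d * Matrix.diagonal e) * Uᴴ := by
        rw [hU]; simp only [Matrix.mul_one, Matrix.mul_assoc]
    _ = _ := by rw [Matrix.diagonal_mul_diagonal]

lemma trace_conjM (U : Matrix n n ℂ) (hU : Uᴴ * U = 1) (X : Matrix n n ℂ) :
    (U * X * Uᴴ).trace = X.trace := by
  rw [Matrix.trace_mul_cycle, hU, Matrix.one_mul]

lemma powers_stormer {ρ σ : Matrix n n ℂ} (hρ : ρ.PosSemidef) (hσ : σ.PosSemidef)
    (hρtr : ρ.trace = 1) (hσtr : σ.trace = 1) :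
    1 - traceNorm (ρ - σ) / 2 ≤ ((msqrt σ * msqrt ρ).trace).re := by
  have hRps : (msqrt ρ).PosSemidef := by rw [msqrt_eq hρ]; exact hρ.posSemidef_sqrt
  have hSps : (msqrt σ).PosSemidef := by rw [msqrt_eq hσ]; exact hσ.posSemidef_sqrt
  have hRR : msqrt ρ * msqrt ρ = ρ := by rw [msqrt_eq hρ]; exact hρ.sqrt_mul_self
  have hSS : msqrt σ * msqrt σ = σ := by rw [msqrt_eq hσ]; exact hσ.sqrt_mul_self
  set R := msqrt ρ with hRdef
  set S := msqrt σ with hSdef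
  set C := R - S with hCdef
  set D := R + S with hDdef
  have hC : C.IsHermitian := hRps.1.sub hSps.1
  have hM : (ρ - σ).IsHermitian := hρ.1.sub hσ.1
  set V : Matrix n n ℂ := (hC.eigenvectorUnitary : Matrix n n ℂ) with hVdef
  set lam := hC.eigenvalues with hlamdef
  have hV1 : Vᴴ * V = 1 := by
    simpa [Matrix.star_eq_conjTranspose] using Matrix.UnitaryGroup.star_mul_self
      hC.eigenvectorUnitary
  have hV2 : V * Vᴴ = 1 := by
    simpa [Matrix.star_eq_conjTranspose] using hC.eigenvectorUnitary.2.2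
  have hCspec : C = V * Matrix.diagonal (RCLike.ofReal ∘ lam) * Vᴴ := by
    simpa [Matrix.star_eq_conjTranspose] using hC.spectral_theorem
  have hCdiag : Vᴴ * C * V = Matrix.diagonal (RCLike.ofReal ∘ lam) := by
    have := hC.star_mul_self_mul_eq_diagonal
    rwa [Matrix.star_eq_conjTranspose] at this
  set sg : n → ℝ := fun i => if 0 ≤ lam i then 1 else -1 with hsgdef
  set Sgn : Matrix n n ℂ := V * Matrix.diagonal (RCLike.ofReal ∘ sg) * Vᴴ with hSgndef
  set AbsC : Matrix n n ℂ :=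
    V * Matrix.diagonal (RCLike.ofReal ∘ fun i => |lam i|) * Vᴴ with hAbsCdef
  have hsglam : (fun i => (RCLike.ofReal ∘ sg) i * (RCLike.ofReal ∘ lam) i)
      = ((RCLike.ofReal ∘ fun i => |lam i|) : n → ℂ) := by
    funext i
    simp only [Function.comp_apply, hsgdef]
    split_ifs with h
    · rw [abs_of_nonneg h]; simp
    · rw [abs_of_neg (lt_of_not_ge h)]; push_cast; ring
  have hlamsg : (fun i => (RCLike.ofReal ∘ lam) i * (RCLike.ofReal ∘ sg) i)
      = ((RCLike.ofReal ∘ fun i => |lam i|) : n → ℂ) := by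
    rw [← hsglam]; funext i; ring
  have hSgnC : Sgn * C = AbsC := by
    rw [hSgndef, hCspec, conj_mul_conjM V hV1, hAbsCdef, hsglam]
  have hCSgn : C * Sgn = AbsC := by
    rw [hSgndef, hCspec, conj_mul_conjM V hV1, hAbsCdef, hlamsg]
  -- 2 M = C D + D C
  have h2M : C * D + D * C = (ρ - σ) + (ρ - σ) := by
    have expand : (R - S) * (R + S) + (R + S) * (R - S)
        = (R * R - S * S) + (R * R - S * S) := by noncomm_ring
    rw [hCdef, hDdef, expand, hRR, hSS]
  -- trace (Sgn * M) = trace (AbsC * D)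
  have htr1 : (Sgn * (ρ - σ)).trace = (AbsC * D).trace := by
    have e1 : (Sgn * (C * D)).trace = (AbsC * D).trace := by
      rw [← Matrix.mul_assoc, hSgnC]
    have e2 : (Sgn * (D * C)).trace = (AbsC * D).trace := by
      rw [← Matrix.mul_assoc, Matrix.trace_mul_comm, ← Matrix.mul_assoc, hCSgn]
    have key : (Sgn * (ρ - σ)).trace + (Sgn * (ρ - σ)).trace
        = (AbsC * D).trace + (AbsC * D).trace := by
      calc (Sgn * (ρ - σ)).trace + (Sgn * (ρ - σ)).trace
          = (Sgn * (ρ - σ) + Sgn * (ρ - σ)).trace := (Matrix.trace_add _ _).symm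
        _ = (Sgn * (C * D) + Sgn * (D * C)).trace := by
            rw [← Matrix.mul_add, ← Matrix.mul_add, h2M]
        _ = (Sgn * (C * D)).trace + (Sgn * (D * C)).trace := Matrix.trace_add _ _
        _ = _ := by rw [e1, e2]
    have h2 : (2 : ℂ) * (Sgn * (ρ - σ)).trace = 2 * (AbsC * D).trace := by
      rw [two_mul, two_mul]; exact key
    exact mul_left_cancel₀ two_ne_zero h2
  -- upper bound: re trace (Sgn * M) ≤ ∑ |mu|
  set W : Matrix n n ℂ := (hM.eigenvectorUnitary : Matrix n n ℂ) with hWdef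
  set mu := hM.eigenvalues with hmudef
  have hW1 : Wᴴ * W = 1 := by
    simpa [Matrix.star_eq_conjTranspose] using Matrix.UnitaryGroup.star_mul_self
      hM.eigenvectorUnitary
  have hW2 : W * Wᴴ = 1 := by
    simpa [Matrix.star_eq_conjTranspose] using hM.eigenvectorUnitary.2.2
  have hMspec : (ρ - σ) = W * Matrix.diagonal (RCLike.ofReal ∘ mu) * Wᴴ := by
    simpa [Matrix.star_eq_conjTranspose] using hM.spectral_theorem
  have htrSgnM : (Sgn * (ρ - σ)).trace
      = ∑ j, (RCLike.ofReal (mu j) : ℂ) * ((Wᴴ * Sgn * W) j j) := by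
    calc (Sgn * (ρ - σ)).trace
        = (Sgn * (W * Matrix.diagonal (RCLike.ofReal ∘ mu) * Wᴴ)).trace := by rw [← hMspec]
      _ = ((Sgn * W * Matrix.diagonal (RCLike.ofReal ∘ mu)) * Wᴴ).trace := by
          simp only [Matrix.mul_assoc]
      _ = (Wᴴ * (Sgn * W * Matrix.diagonal (RCLike.ofReal ∘ mu))).trace :=
          Matrix.trace_mul_comm _ _
      _ = ((Wᴴ * Sgn * W) * Matrix.diagonal (RCLike.ofReal ∘ mu)).trace := by
          simp only [Matrix.mul_assoc]
      _ = ∑ j, (RCLike.ofReal ∘ mu) j * ((Wᴴ * Sgn * W) j j) :=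
          trace_mul_diagonal _ _
  -- the diagonal entries of Wᴴ Sgn W have |re| ≤ 1
  have htbound : ∀ j, |((Wᴴ * Sgn * W) j j).re| ≤ 1 := by
    intro j
    set U : Matrix n n ℂ := Vᴴ * W with hUdef
    have hUU : Uᴴ * U = 1 := by
      rw [hUdef, Matrix.conjTranspose_mul, Matrix.conjTranspose_conjTranspose]
      calc Wᴴ * V * (Vᴴ * W) = Wᴴ * (V * Vᴴ) * W := by simp only [Matrix.mul_assoc]
        _ = 1 := by rw [hV2, Matrix.mul_one, hW1]
    have hWSW : Wᴴ * Sgn * W = Uᴴ * Matrix.diagonal (RCLike.ofReal ∘ sg) * U := by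
      rw [hUdef, hSgndef, Matrix.conjTranspose_mul, Matrix.conjTranspose_conjTranspose]
      simp only [Matrix.mul_assoc]
    set u : n → ℂ := fun i => U i j with hudef
    have hentry : (Uᴴ * Matrix.diagonal (RCLike.ofReal ∘ sg : n → ℂ) * U) j j
        = ∑ i, (starRingEnd ℂ) (u i) * ((RCLike.ofReal (sg i) : ℂ) * u i) := by
      rw [diag_conj]
      simp [dotProduct, Matrix.mulVec_diagonal, hudef]
    have hterm : ∀ i, (starRingEnd ℂ) (u i) * ((RCLike.ofReal (sg i) : ℂ) * u i)
        = ((sg i * Complex.normSq (u i) : ℝ) : ℂ) := by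
      intro i
      calc (starRingEnd ℂ) (u i) * ((RCLike.ofReal (sg i) : ℂ) * u i)
          = (RCLike.ofReal (sg i) : ℂ) * (u i * (starRingEnd ℂ) (u i)) := by ring
        _ = ((sg i : ℝ) : ℂ) * ((Complex.normSq (u i) : ℝ) : ℂ) := by
            rw [Complex.mul_conj]; rfl
        _ = _ := by rw [← Complex.ofReal_mul]
    have hone : ∑ i, Complex.normSq (u i) = 1 := by
      have h1 : (Uᴴ * (1 : Matrix n n ℂ) * U) j j = 1 := by
        rw [Matrix.mul_one, hUU, Matrix.one_apply_eq]
      rw [diag_conj] at h1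
      have h2 : dotProduct (star u) ((1 : Matrix n n ℂ) *ᵥ u)
          = ((∑ i, Complex.normSq (u i) : ℝ) : ℂ) := by
        rw [Matrix.one_mulVec]
        simp only [dotProduct, Pi.star_apply, Complex.ofReal_sum]
        exact Finset.sum_congr rfl fun i _ => by
          rw [← Complex.mul_conj]; simp [mul_comm]
      rw [h2] at h1
      exact_mod_cast h1
    have hre : ((Wᴴ * Sgn * W) j j).re = ∑ i, sg i * Complex.normSq (u i) := by
      rw [hWSW, hentry]
      rw [Finset.sum_congr rfl fun i _ => hterm i, ← Complex.ofReal_sum]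
      exact Complex.ofReal_re _
    rw [hre]
    calc |∑ i, sg i * Complex.normSq (u i)| ≤ ∑ i, |sg i * Complex.normSq (u i)| :=
          Finset.abs_sum_le_sum_abs _ _
      _ = ∑ i, Complex.normSq (u i) := by
          refine Finset.sum_congr rfl fun i _ => ?_
          rw [abs_mul]
          have : |sg i| = 1 := by simp only [hsgdef]; split_ifs <;> simp
          rw [this, one_mul, abs_of_nonneg (Complex.normSq_nonneg _)]
      _ = 1 := hone
  have hup : ((Sgn * (ρ - σ)).trace).re ≤ ∑ j, |mu j| := by
    rw [htrSgnM, Complex.re_sum]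
    refine Finset.sum_le_sum fun j _ => ?_
    have : ((RCLike.ofReal (mu j) : ℂ) * ((Wᴴ * Sgn * W) j j)).re
        = mu j * ((Wᴴ * Sgn * W) j j).re := Complex.re_ofReal_mul _ _
    rw [this]
    calc mu j * ((Wᴴ * Sgn * W) j j).re ≤ |mu j * ((Wᴴ * Sgn * W) j j).re| := le_abs_self _
      _ = |mu j| * |((Wᴴ * Sgn * W) j j).re| := abs_mul _ _
      _ ≤ |mu j| * 1 := by
          exact mul_le_mul_of_nonneg_left (htbound j) (abs_nonneg _)
      _ = |mu j| := mul_one _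
  -- lower bound: ∑ lam² ≤ re trace (AbsC * D)
  have htrAbsD : (AbsC * D).trace
      = ∑ i, (RCLike.ofReal |lam i| : ℂ) * ((Vᴴ * D * V) i i) := by
    calc (AbsC * D).trace
        = (V * (Matrix.diagonal (RCLike.ofReal ∘ fun i => |lam i| : n → ℂ) * (Vᴴ * D))).trace := by
          rw [hAbsCdef]; simp only [Matrix.mul_assoc]
      _ = ((Matrix.diagonal (RCLike.ofReal ∘ fun i => |lam i| : n → ℂ) * (Vᴴ * D)) * V).trace :=
          Matrix.trace_mul_comm _ _
      _ = (Matrix.diagonal (RCLike.ofReal ∘ fun i => |lam i| : n → ℂ) * (Vᴴ * D * V)).trace := by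
          simp only [Matrix.mul_assoc]
      _ = ∑ i, (RCLike.ofReal |lam i| : ℂ) * ((Vᴴ * D * V) i i) := trace_diagonal_mul _ _
  have hDsplit : Vᴴ * D * V = Vᴴ * R * V + Vᴴ * S * V := by
    rw [hDdef, Matrix.mul_add, Matrix.add_mul]
  have hCsplit : Vᴴ * C * V = Vᴴ * R * V - Vᴴ * S * V := by
    rw [hCdef, Matrix.mul_sub, Matrix.sub_mul]
  have hlam_eq : ∀ i, lam i = ((Vᴴ * R * V) i i).re - ((Vᴴ * S * V) i i).re := by
    intro i
    have h1 : (Vᴴ * C * V) i i = (RCLike.ofReal (lam i) : ℂ) := by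
      rw [hCdiag]; simp [Matrix.diagonal]
    rw [hCsplit] at h1
    have := congrArg Complex.re h1
    simpa using this.symm
  have hlowterm : ∀ i, |lam i| ≤ ((Vᴴ * D * V) i i).re := by
    intro i
    have ha := (diag_conj_psd hRps V i).1
    have hb := (diag_conj_psd hSps V i).1
    have hD : ((Vᴴ * D * V) i i).re = ((Vᴴ * R * V) i i).re + ((Vᴴ * S * V) i i).re := by
      rw [hDsplit]; simp
    rw [hD, hlam_eq i]
    calc |((Vᴴ * R * V) i i).re - ((Vᴴ * S * V) i i).re|
        ≤ |((Vᴴ * R * V) i i).re| + |((Vᴴ * S * V) i i).re| := abs_sub _ _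
      _ = _ := by rw [abs_of_nonneg ha, abs_of_nonneg hb]
  have hlow2 : ∑ i, lam i ^ 2 ≤ ((AbsC * D).trace).re := by
    rw [htrAbsD, Complex.re_sum]
    refine Finset.sum_le_sum fun i _ => ?_
    have hre : ((RCLike.ofReal |lam i| : ℂ) * ((Vᴴ * D * V) i i)).re
        = |lam i| * ((Vᴴ * D * V) i i).re := Complex.re_ofReal_mul _ _
    rw [hre]
    calc lam i ^ 2 = |lam i| * |lam i| := by rw [← sq_abs]; ring
      _ ≤ |lam i| * ((Vᴴ * D * V) i i).re :=
          mul_le_mul_of_nonneg_left (hlowterm i) (abs_nonneg _)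
  -- trace of C²
  have hCC1 : (C * C).trace = ((∑ i, lam i ^ 2 : ℝ) : ℂ) := by
    rw [hCspec, conj_mul_conjM V hV1, trace_conjM V hV1, Matrix.trace_diagonal,
      Complex.ofReal_sum]
    refine Finset.sum_congr rfl fun i _ => ?_
    simp only [Function.comp_apply]
    rw [show ((lam i ^ 2 : ℝ) : ℂ) = ((lam i : ℝ) : ℂ) * ((lam i : ℝ) : ℂ) by push_cast; ring]
    rfl
  have hCC2 : (C * C).trace = 2 - 2 * (S * R).trace := by
    have expand : (R - S) * (R - S) = (R * R + S * S) - (R * S + S * R) := by noncomm_ring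
    rw [hCdef, expand, Matrix.trace_sub, Matrix.trace_add, Matrix.trace_add, hRR, hSS,
      hρtr, hσtr, Matrix.trace_mul_comm R S]
    ring
  have hSR : ((S * R).trace).re = 1 - (∑ i, lam i ^ 2) / 2 := by
    have hc : (S * R).trace = 1 - ((∑ i, lam i ^ 2 : ℝ) : ℂ) / 2 := by
      linear_combination (hCC1.symm.trans hCC2) / 2
    rw [hc, show ((∑ i, lam i ^ 2 : ℝ) : ℂ) / 2 = (((∑ i, lam i ^ 2) / 2 : ℝ) : ℂ) by
      push_cast; ring]
    rw [Complex.sub_re, Complex.one_re, Complex.ofReal_re]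
  -- conclusion
  have hchain : ∑ i, lam i ^ 2 ≤ ∑ j, |mu j| := by
    calc ∑ i, lam i ^ 2 ≤ ((AbsC * D).trace).re := hlow2
      _ = ((Sgn * (ρ - σ)).trace).re := by rw [htr1]
      _ ≤ ∑ j, |mu j| := hup
  rw [traceNorm_hermitian hM, hSR]
  rw [hmudef] at hchain
  linarith

end Aux

/-- For density matrices `ρ, σ`, `F(ρ,σ) ≥ (1 - ½‖ρ - σ‖₁)²`. -/

theorem fidelity_ge_one_sub_half_traceNorm
    {n : Type*} [Fintype n] [DecidableEq n]
    (ρ σ : Matrix n n ℂ) (hρ : ρ.PosSemidef) (hσ : σ.PosSemidef)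
    (hρtr : ρ.trace = 1) (hσtr : σ.trace = 1) :
    (1 - traceNorm (ρ - σ) / 2) ^ 2 ≤ fidelity ρ σ := by
  have hPS := powers_stormer hρ hσ hρtr hσtr
  have h2 := traceNorm_sub_le_two hρ hσ hρtr hσtr
  have hRps : (msqrt ρ).PosSemidef := by rw [msqrt_eq hρ]; exact hρ.posSemidef_sqrt
  have hSps : (msqrt σ).PosSemidef := by rw [msqrt_eq hσ]; exact hσ.posSemidef_sqrt
  have hCS := re_trace_le_trace_msqrt (msqrt σ * msqrt ρ)
  have hNN : (msqrt σ * msqrt ρ)ᴴ * (msqrt σ * msqrt ρ) = msqrt ρ * σ * msqrt ρ := by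
    rw [Matrix.conjTranspose_mul, hRps.1.eq, hSps.1.eq]
    have hSS : msqrt σ * msqrt σ = σ := by rw [msqrt_eq hσ]; exact hσ.sqrt_mul_self
    calc msqrt ρ * msqrt σ * (msqrt σ * msqrt ρ)
        = msqrt ρ * (msqrt σ * msqrt σ) * msqrt ρ := by simp only [Matrix.mul_assoc]
      _ = _ := by rw [hSS]
  rw [hNN] at hCS
  rw [fidelity]
  have h0 : 0 ≤ 1 - traceNorm (ρ - σ) / 2 := by linarith
  have hle : 1 - traceNorm (ρ - σ) / 2 ≤ (msqrt (msqrt ρ * σ * msqrt ρ)).trace.re :=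
    le_trans hPS hCS
  exact pow_le_pow_left₀ h0 hle 2
end

section
/- For full-rank density matrices ρ_φ on H_γ and ρ_σ on H_f and operators X, W : H_γ ⊗ H_f → H_A with W an isometry, if ‖(X - W)(ρ_φ ⊗ ρ_σ)^{1/2}‖₂ ≤ ε (Hilbert-Schmidt norm), then ‖(ρ_φ ⊗ ρ_σ)^{1/2}(X†X - 𝟙)(ρ_φ ⊗ ρ_σ)^{1/2}‖₁ ≤ 2ε + ε². -/
open scoped ComplexOrder Matrix Kronecker

/-- Hilbert-Schmidt norm `‖A‖₂ = √Tr(Aᴴ A)`. -/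
noncomputable def hsNorm {m n : Type*} [Fintype m] [Fintype n]
    (A : Matrix m n ℂ) : ℝ :=
  Real.sqrt ((Aᴴ * A).trace.re)

namespace MyAux

set_option linter.unusedSectionVars false

section SqrtAux

open scoped MatrixOrder

lemma msqrt_eq_cfc {k : Type*} [Fintype k] [DecidableEq k] {A : Matrix k k ℂ}
    (hA : A.PosSemidef) : msqrt A = CFC.sqrt A := by
  unfold msqrt
  rw [dif_pos hA, CFC.sqrt_eq_real_sqrt A hA.nonneg, cfcₙ_eq_cfc, hA.1.cfc_eq]
  simp [Matrix.IsHermitian.cfc, Unitary.conjStarAlgAut_apply, Matrix.star_eq_conjTranspose]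

lemma msqrt_posSemidef {k : Type*} [Fintype k] [DecidableEq k] {A : Matrix k k ℂ}
    (hA : A.PosSemidef) : (msqrt A).PosSemidef := by
  rw [msqrt_eq_cfc hA]; exact Matrix.nonneg_iff_posSemidef.mp (CFC.sqrt_nonneg A)

lemma msqrt_mul_self {k : Type*} [Fintype k] [DecidableEq k] {A : Matrix k k ℂ}
    (hA : A.PosSemidef) : msqrt A * msqrt A = A := by
  rw [msqrt_eq_cfc hA]; exact CFC.sqrt_mul_sqrt_self A hA.nonneg

lemma msqrt_unique {k : Type*} [Fintype k] [DecidableEq k] {A B : Matrix k k ℂ}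
    (hA : A.PosSemidef) (hB : B.PosSemidef) (h : B ^ 2 = A) : msqrt A = B := by
  rw [msqrt_eq_cfc hA]; exact CFC.sqrt_unique (by rw [← pow_two]; exact h) hB.nonneg

lemma posSemidef_kronecker_aux {k l : Type*} [Fintype k] [DecidableEq k] [Fintype l]
    [DecidableEq l] {A : Matrix k k ℂ} (hA : A.PosSemidef) :
    ∃ C : Matrix k k ℂ, A = Cᴴ * C := by
  obtain ⟨C, hC⟩ := CStarAlgebra.nonneg_iff_eq_star_mul_self.mp hA.nonneg
  exact ⟨C, by rw [hC, Matrix.star_eq_conjTranspose]⟩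

end SqrtAux

variable {m n : Type*} [Fintype m] [Fintype n]

lemma trace_conjTranspose_mul (A B : Matrix m n ℂ) :
    (Aᴴ * B).trace = ∑ p : m × n, (starRingEnd ℂ) (A p.1 p.2) * B p.1 p.2 := by
  rw [Fintype.sum_prod_type]
  simp only [Matrix.trace, Matrix.diag, Matrix.mul_apply, Matrix.conjTranspose_apply]
  exact Finset.sum_comm

lemma hsNorm_eq_norm (A : Matrix m n ℂ) :
    hsNorm A = ‖(WithLp.equiv 2 ((m × n) → ℂ)).symm (fun p => A p.1 p.2)‖ := by
  rw [hsNorm, EuclideanSpace.norm_eq, trace_conjTranspose_mul]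
  congr 1
  rw [Complex.re_sum]
  refine Finset.sum_congr rfl fun p _ => ?_
  rw [← Complex.normSq_eq_conj_mul_self]
  simp [WithLp.equiv, Complex.sq_norm]

lemma hsNorm_nonneg (A : Matrix m n ℂ) : 0 ≤ hsNorm A := Real.sqrt_nonneg _

lemma abs_trace_le (A B : Matrix m n ℂ) :
    ‖(Aᴴ * B).trace‖ ≤ hsNorm A * hsNorm B := by
  rw [hsNorm_eq_norm, hsNorm_eq_norm]
  set x : EuclideanSpace ℂ (m × n) := (WithLp.equiv 2 ((m × n) → ℂ)).symm (fun p => A p.1 p.2)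
  set y : EuclideanSpace ℂ (m × n) := (WithLp.equiv 2 ((m × n) → ℂ)).symm (fun p => B p.1 p.2)
  have : (Aᴴ * B).trace = inner ℂ x y := by
    rw [trace_conjTranspose_mul, PiLp.inner_apply]
    simp [x, y, WithLp.equiv, RCLike.inner_apply, mul_comm]
  rw [this]
  exact norm_inner_le_norm x y

lemma hsNorm_mul_unitary {k : Type*} [Fintype k] [DecidableEq k] (Z : Matrix m k ℂ)
    (C : Matrix k k ℂ) (hC : C * Cᴴ = 1) : hsNorm (Z * C) = hsNorm Z := by
  unfold hsNorm
  congr 2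
  calc ((Z * C)ᴴ * (Z * C)).trace
      = (Cᴴ * ((Zᴴ * Z) * C)).trace := by
        rw [Matrix.conjTranspose_mul]
        simp only [Matrix.mul_assoc]
    _ = ((Zᴴ * Z) * (C * Cᴴ)).trace := by
        rw [Matrix.trace_mul_comm, Matrix.mul_assoc]
    _ = (Zᴴ * Z).trace := by rw [hC, Matrix.mul_one]

lemma kronecker_conjTranspose {l p : Type*} [Fintype l] [Fintype p]
    (A : Matrix m l ℂ) (B : Matrix n p ℂ) : (A ⊗ₖ B)ᴴ = Aᴴ ⊗ₖ Bᴴ := by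
  ext ⟨i, j⟩ ⟨k, l'⟩
  simp [Matrix.conjTranspose_apply, map_mul]

lemma posSemidef_kronecker [DecidableEq m] [DecidableEq n]
    {A : Matrix m m ℂ} {B : Matrix n n ℂ}
    (hA : A.PosSemidef) (hB : B.PosSemidef) : (A ⊗ₖ B).PosSemidef := by
  obtain ⟨C, hC⟩ := posSemidef_kronecker_aux (l := n) hA
  obtain ⟨D, hD⟩ := posSemidef_kronecker_aux (l := m) hB
  rw [hC, hD, Matrix.mul_kronecker_mul, ← kronecker_conjTranspose]
  exact Matrix.posSemidef_conjTranspose_mul_self _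

lemma exists_flip_unitary {k : Type*} [Fintype k] [DecidableEq k]
    {H : Matrix k k ℂ} (hH : H.IsHermitian) :
    ∃ C : Matrix k k ℂ, C * Cᴴ = 1 ∧ C * H = msqrt (Hᴴ * H) := by
  classical
  set V : Matrix k k ℂ := (Matrix.IsHermitian.eigenvectorUnitary hH : Matrix k k ℂ) with hVdef
  have hV1 : V * Vᴴ = 1 := by
    have := Matrix.mem_unitaryGroup_iff.mp (Matrix.IsHermitian.eigenvectorUnitary hH).2
    simpa [Matrix.star_eq_conjTranspose] using this
  have hV2 : Vᴴ * V = 1 := by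
    have := Matrix.mem_unitaryGroup_iff'.mp (Matrix.IsHermitian.eigenvectorUnitary hH).2
    simpa [Matrix.star_eq_conjTranspose] using this
  have sandwich : ∀ a b : k → ℂ,
      (V * Matrix.diagonal a * Vᴴ) * (V * Matrix.diagonal b * Vᴴ)
        = V * Matrix.diagonal (fun i => a i * b i) * Vᴴ := by
    intro a b
    simp only [Matrix.mul_assoc]
    rw [← Matrix.mul_assoc Vᴴ V, hV2, Matrix.one_mul,
      ← Matrix.mul_assoc (Matrix.diagonal a), Matrix.diagonal_mul_diagonal]
  set lam : k → ℝ := hH.eigenvalues with hlam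
  have hspec : H = V * Matrix.diagonal (fun i => (lam i : ℂ)) * Vᴴ := by
    have := hH.spectral_theorem
    simpa [Matrix.star_eq_conjTranspose, Function.comp_def] using this
  set s : k → ℝ := fun i => if 0 ≤ lam i then 1 else -1 with hs
  refine ⟨V * Matrix.diagonal (fun i => (s i : ℂ)) * Vᴴ, ?_, ?_⟩
  · have hstar : (Matrix.diagonal fun i => (s i : ℂ))ᴴ
        = Matrix.diagonal fun i => (s i : ℂ) := by
      have hsa : (star fun i => ((s i : ℝ) : ℂ)) = fun i => ((s i : ℝ) : ℂ) := by
        funext i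
        exact Complex.conj_ofReal _
      rw [Matrix.diagonal_conjTranspose, hsa]
    have hEH : (V * Matrix.diagonal (fun i => (s i : ℂ)) * Vᴴ)ᴴ
        = V * Matrix.diagonal (fun i => (s i : ℂ)) * Vᴴ := by
      rw [Matrix.conjTranspose_mul, Matrix.conjTranspose_mul,
        Matrix.conjTranspose_conjTranspose, hstar, Matrix.mul_assoc]
    rw [hEH, sandwich]
    have : (fun i => ((s i : ℂ)) * (s i : ℂ)) = fun _ => (1 : ℂ) := by
      funext i
      by_cases hi : 0 ≤ lam i <;> simp [hs, hi]
    rw [this, Matrix.diagonal_one, Matrix.mul_one, hV1]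
  · have habs : (fun i => ((s i : ℂ)) * (lam i : ℂ)) = fun i => ((|lam i| : ℝ) : ℂ) := by
      funext i
      by_cases hi : 0 ≤ lam i
      · simp [hs, hi, abs_of_nonneg hi]
      · push_neg at hi
        simp [hs, not_le.mpr hi, abs_of_neg hi]
    have hP : (Hᴴ * H).PosSemidef := Matrix.posSemidef_conjTranspose_mul_self H
    have hQpsd : (V * Matrix.diagonal (fun i => ((|lam i| : ℝ) : ℂ)) * Vᴴ).PosSemidef := by
      refine Matrix.PosSemidef.mul_mul_conjTranspose_same ?_ V
      rw [Matrix.posSemidef_diagonal_iff]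
      intro i
      rw [Complex.zero_le_real]
      exact abs_nonneg _
    have hQ2 : (V * Matrix.diagonal (fun i => ((|lam i| : ℝ) : ℂ)) * Vᴴ) ^ 2 = Hᴴ * H := by
      have habs2 : (fun i => ((|lam i| : ℝ) : ℂ) * ((|lam i| : ℝ) : ℂ))
          = fun i => ((lam i : ℝ) : ℂ) * ((lam i : ℝ) : ℂ) := by
        funext i
        rw [← Complex.ofReal_mul, ← Complex.ofReal_mul, abs_mul_abs_self]
      rw [pow_two, sandwich, habs2, hH.eq]
      conv_rhs => rw [hspec]
      rw [sandwich]
    have key : msqrt (Hᴴ * H) = V * Matrix.diagonal (fun i => ((|lam i| : ℝ) : ℂ)) * Vᴴ := by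
      exact msqrt_unique hP hQpsd hQ2
    rw [key]
    conv_lhs => rw [hspec]
    rw [sandwich, habs]

end MyAux

open MyAux

/-- If `W` is an isometry and `‖(X - W)(ρ_φ ⊗ ρ_σ)^{1/2}‖₂ ≤ ε`, then
`‖(ρ_φ ⊗ ρ_σ)^{1/2}(X†X - 𝟙)(ρ_φ ⊗ ρ_σ)^{1/2}‖₁ ≤ 2ε + ε²`. -/
theorem approx_isometry_traceNorm_bound
    {γ f A : Type*} [Fintype γ] [DecidableEq γ] [Fintype f] [DecidableEq f] [Fintype A]
    (ρφ : Matrix γ γ ℂ) (ρσ : Matrix f f ℂ)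
    (hρφ : ρφ.PosDef) (hρσ : ρσ.PosDef)
    (hρφtr : ρφ.trace = 1) (hρσtr : ρσ.trace = 1)
    (X W : Matrix A (γ × f) ℂ) (hW : Wᴴ * W = 1)
    (ε : ℝ)
    (h : hsNorm ((X - W) * msqrt (ρφ ⊗ₖ ρσ)) ≤ ε) :
    traceNorm (msqrt (ρφ ⊗ₖ ρσ) * (Xᴴ * X - 1) * msqrt (ρφ ⊗ₖ ρσ))
      ≤ 2 * ε + ε ^ 2 := by
  classical
  set ρ : Matrix (γ × f) (γ × f) ℂ := ρφ ⊗ₖ ρσ with hρdef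
  have hρ : ρ.PosSemidef := posSemidef_kronecker hρφ.posSemidef hρσ.posSemidef
  set S : Matrix (γ × f) (γ × f) ℂ := msqrt ρ with hSdef
  have hSps : S.PosSemidef := by
    rw [hSdef]; exact msqrt_posSemidef hρ
  have hSH : Sᴴ = S := hSps.1
  have hSS : S * S = ρ := by
    rw [hSdef]; exact msqrt_mul_self hρ
  have hAε : hsNorm ((X - W) * S) ≤ ε := h
  have hε0 : 0 ≤ ε := le_trans (hsNorm_nonneg _) hAε
  -- norm of W * S
  have hWS : (W * S)ᴴ * (W * S) = S * S := by
    rw [Matrix.conjTranspose_mul, Matrix.mul_assoc, ← Matrix.mul_assoc Wᴴ W, hW,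
      Matrix.one_mul, hSH]
  have hBS : hsNorm (W * S) = 1 := by
    unfold hsNorm
    rw [hWS, hSS, hρdef, Matrix.trace_kronecker, hρφtr, hρσtr, mul_one, Complex.one_re,
      Real.sqrt_one]
  set M : Matrix (γ × f) (γ × f) ℂ := S * (Xᴴ * X - 1) * S with hM
  have hXX : (Xᴴ * X - 1 : Matrix (γ × f) (γ × f) ℂ)ᴴ = Xᴴ * X - 1 := by
    rw [Matrix.conjTranspose_sub, Matrix.conjTranspose_mul,
      Matrix.conjTranspose_conjTranspose, Matrix.conjTranspose_one]
  have hMH : M.IsHermitian := by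
    show Mᴴ = M
    rw [hM, Matrix.conjTranspose_mul, Matrix.conjTranspose_mul, hXX, hSH,
      ← Matrix.mul_assoc]
  have key' : (X - W)ᴴ * (X - W) + (X - W)ᴴ * W + Wᴴ * (X - W) = Xᴴ * X - 1 := by
    rw [← hW]
    simp only [Matrix.conjTranspose_sub, Matrix.sub_mul, Matrix.mul_sub]
    abel
  have hsplit : M = ((X - W) * S)ᴴ * ((X - W) * S) + ((X - W) * S)ᴴ * (W * S)
      + (W * S)ᴴ * ((X - W) * S) := by
    have expand : ((X - W) * S)ᴴ * ((X - W) * S) + ((X - W) * S)ᴴ * (W * S)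
        + (W * S)ᴴ * ((X - W) * S)
        = Sᴴ * (((X - W)ᴴ * (X - W) + (X - W)ᴴ * W + Wᴴ * (X - W)) * S) := by
      simp only [Matrix.conjTranspose_mul, Matrix.add_mul, Matrix.mul_add,
        Matrix.mul_assoc]
    rw [expand, key', hSH, hM, Matrix.mul_assoc]
  obtain ⟨C, hC1, hCM⟩ := exists_flip_unitary hMH
  have tn : traceNorm M = ((C * M).trace).re := by
    unfold traceNorm
    rw [hCM]
  have term : ∀ Y Z : Matrix A (γ × f) ℂ,
      ((C * (Yᴴ * Z)).trace).re ≤ hsNorm Y * hsNorm Z := by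
    intro Y Z
    have h1 : (C * (Yᴴ * Z)).trace = (Yᴴ * (Z * C)).trace := by
      rw [Matrix.trace_mul_comm, Matrix.mul_assoc]
    calc ((C * (Yᴴ * Z)).trace).re ≤ ‖(C * (Yᴴ * Z)).trace‖ := by
          exact Complex.re_le_norm _
      _ = ‖(Yᴴ * (Z * C)).trace‖ := by rw [h1]
      _ ≤ hsNorm Y * hsNorm (Z * C) := abs_trace_le _ _
      _ = hsNorm Y * hsNorm Z := by rw [hsNorm_mul_unitary _ _ hC1]
  have hdecomp : (C * M).trace = (C * (((X - W) * S)ᴴ * ((X - W) * S))).trace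
      + (C * (((X - W) * S)ᴴ * (W * S))).trace
      + (C * ((W * S)ᴴ * ((X - W) * S))).trace := by
    conv_lhs => rw [hsplit]
    rw [Matrix.mul_add, Matrix.mul_add, Matrix.trace_add, Matrix.trace_add]
  have t1 := term ((X - W) * S) ((X - W) * S)
  have t2 := term ((X - W) * S) (W * S)
  have t3 := term (W * S) ((X - W) * S)
  have hn := hsNorm_nonneg ((X - W) * S)
  rw [tn, hdecomp]
  simp only [Complex.add_re]
  rw [hBS] at t2 t3
  nlinarith [t1, t2, t3, hAε, hε0, hn]
end
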